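/- Let (F^θ)_{θ∈Θ} and (Q^θ)_{θ∈Θ} be common-value information structures with mF^θ = mQ^θ for every θ ∈ Θ (all marginals strictly positive), and let F(t) := Σ_θ μ₀(θ)F^θ(t) and Q(t) := Σ_θ μ₀(θ)Q^θ(t) be the unconditional joint distributions of signals. If F is cCAD-higher than Q, then E^c(Γ,F) ⊇ E^c(Γ,Q) for every separable common-value affine coordination game Γ: every cutoff equilibrium under Q remains a cutoff equilibrium under F. -/

import Mathlib

open Finset

def IsPMF {n : ℕ} {S : Type*} [Fintype S] (F : (Fin (n + 2) → S) → ℝ) : Prop :=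
  (∀ t, 0 ≤ F t) ∧ ∑ t : Fin (n + 2) → S, F t = 1

def Exchangeable {n : ℕ} {S : Type*} [Fintype S] (F : (Fin (n + 2) → S) → ℝ) : Prop :=
  ∀ (π : Equiv.Perm (Fin (n + 2))) (t : Fin (n + 2) → S), F (t ∘ π) = F t

noncomputable def marg {n : ℕ} {S : Type*} [Fintype S] [LinearOrder S]
    (F : (Fin (n + 2) → S) → ℝ) (s : S) : ℝ :=
  ∑ t : Fin (n + 2) → S, if t 0 = s then F t else 0

noncomputable def condProb {n : ℕ} {S : Type*} [Fintype S] [LinearOrder S]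
    (F : (Fin (n + 2) → S) → ℝ) (s : S) (K : Finset S) : ℝ :=
  (∑ t : Fin (n + 2) → S, if t 0 = s ∧ t 1 ∈ K then F t else 0) / marg F s

def upSet {S : Type*} [Fintype S] [LinearOrder S] (shat : S) : Finset S :=
  univ.filter (fun y => shat ≤ y)

def downSet {S : Type*} [Fintype S] [LinearOrder S] (shat : S) : Finset S :=
  univ.filter (fun y => y ≤ shat)

def cCAD {n : ℕ} {S : Type*} [Fintype S] [LinearOrder S]
    (F Q : (Fin (n + 2) → S) → ℝ) : Prop :=
  (∀ s, marg F s = marg Q s) ∧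
  ∀ s : S,
    (∀ shat : S, shat ≤ s → condProb F s (upSet shat) ≥ condProb Q s (upSet shat)) ∧
    (∀ shat : S, s ≤ shat → condProb F s (downSet shat) ≥ condProb Q s (downSet shat))

/-- The unconditional joint distribution of signals: `F̄(t) = Σ_θ μ₀(θ) F^θ(t)`. -/
noncomputable def uncond {n : ℕ} {S : Type*} {Θ : Type*} [Fintype Θ]
    (μ₀ : Θ → ℝ) (F : Θ → (Fin (n + 2) → S) → ℝ) (t : Fin (n + 2) → S) : ℝ :=
  ∑ θ : Θ, μ₀ θ * F θ t

noncomputable def posterior {n : ℕ} {S : Type*} [Fintype S] [LinearOrder S]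
    {Θ : Type*} [Fintype Θ] (μ₀ : Θ → ℝ)
    (F : Θ → (Fin (n + 2) → S) → ℝ) (s : S) (θ : Θ) : ℝ :=
  μ₀ θ * marg (F θ) s / ∑ θ' : Θ, μ₀ θ' * marg (F θ') s

/-- A separable common-value affine coordination game:
`d(A,θ) = α(θ) + β·(k·A + l)` with constant `β ≥ 0` and `k > 0`. -/
structure SepGame (Θ : Type*) where
  α : Θ → ℝ
  β : ℝ
  k : ℝ
  l : ℝ
  hβ : 0 ≤ β
  hk : 0 < k

noncomputable def payoff {Θ : Type*} (G : SepGame Θ) (A : ℕ) (θ : Θ) : ℝ :=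
  G.α θ + G.β * (G.k * (A : ℝ) + G.l)

def acts {n : ℕ} {S : Type*} (σ : S → Bool) (t : Fin (n + 2) → S) : ℕ :=
  (univ.filter (fun j : Fin (n + 2) => j ≠ 0 ∧ σ (t j) = true)).card

noncomputable def U {n : ℕ} {S : Type*} [Fintype S] [LinearOrder S]
    {Θ : Type*} [Fintype Θ] (G : SepGame Θ) (μ₀ : Θ → ℝ)
    (F : Θ → (Fin (n + 2) → S) → ℝ) (σ : S → Bool) (s : S) : ℝ :=
  ∑ θ : Θ, posterior μ₀ F s θ *
    ∑ t : Fin (n + 2) → S,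
      if t 0 = s then (F θ t / marg (F θ) s) * payoff G (acts σ t) θ else 0

def IsCutoff {S : Type*} [LinearOrder S] (σ : S → Bool) : Prop :=
  ∃ stilde : S, ∀ s, σ s = true ↔ stilde ≤ s

def IsCutoffEquilibrium {n : ℕ} {S : Type*} [Fintype S] [LinearOrder S]
    {Θ : Type*} [Fintype Θ] (G : SepGame Θ) (μ₀ : Θ → ℝ)
    (F : Θ → (Fin (n + 2) → S) → ℝ) (σ : S → Bool) : Prop :=
  IsCutoff σ ∧
  ∀ s : S, (σ s = true → 0 ≤ U G μ₀ F σ s) ∧ (σ s = false → U G μ₀ F σ s ≤ 0)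


section Aux9

variable {n : ℕ} {S : Type*} [Fintype S] [LinearOrder S] {Θ : Type*} [Fintype Θ]

lemma marg_uncond9 (μ₀ : Θ → ℝ) (F : Θ → (Fin (n + 2) → S) → ℝ) (s : S) :
    marg (uncond μ₀ F) s = ∑ θ : Θ, μ₀ θ * marg (F θ) s := by
  unfold marg uncond
  calc (∑ t : Fin (n + 2) → S, if t 0 = s then ∑ θ : Θ, μ₀ θ * F θ t else 0)
      = ∑ t : Fin (n + 2) → S, ∑ θ : Θ, (if t 0 = s then μ₀ θ * F θ t else 0) := by
        refine Finset.sum_congr rfl fun t _ => ?_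
        split <;> simp
    _ = ∑ θ : Θ, ∑ t : Fin (n + 2) → S, (if t 0 = s then μ₀ θ * F θ t else 0) :=
        Finset.sum_comm
    _ = ∑ θ : Θ, μ₀ θ * ∑ t : Fin (n + 2) → S, (if t 0 = s then F θ t else 0) := by
        refine Finset.sum_congr rfl fun θ _ => ?_
        rw [Finset.mul_sum]
        exact Finset.sum_congr rfl fun t _ => by split <;> simp

lemma marg_uncond_pos9 (μ₀ : Θ → ℝ) (hμ₀ : ∀ θ, 0 ≤ μ₀ θ) (hμ₀sum : ∑ θ : Θ, μ₀ θ = 1)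
    (F : Θ → (Fin (n + 2) → S) → ℝ) (hFpos : ∀ θ s, 0 < marg (F θ) s) (s : S) :
    0 < marg (uncond μ₀ F) s := by
  rw [marg_uncond9]
  obtain ⟨θ₀, hθ₀⟩ : ∃ θ, 0 < μ₀ θ := by
    by_contra h
    push_neg at h
    have : ∀ θ ∈ (univ : Finset Θ), μ₀ θ = 0 := fun θ _ => le_antisymm (h θ) (hμ₀ θ)
    rw [Finset.sum_eq_zero this] at hμ₀sum
    norm_num at hμ₀sum
  have h1 : 0 < μ₀ θ₀ * marg (F θ₀) s := mul_pos hθ₀ (hFpos θ₀ s)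
  have h2 : ∀ θ ∈ (univ : Finset Θ), 0 ≤ μ₀ θ * marg (F θ) s :=
    fun θ _ => mul_nonneg (hμ₀ θ) (hFpos θ s).le
  exact lt_of_lt_of_le h1 (Finset.single_le_sum h2 (mem_univ θ₀))

omit [LinearOrder S] in
lemma exchangeable_uncond9 (μ₀ : Θ → ℝ) (F : Θ → (Fin (n + 2) → S) → ℝ)
    (hex : ∀ θ, Exchangeable (F θ)) : Exchangeable (uncond μ₀ F) := by
  intro π t
  unfold uncond
  exact Finset.sum_congr rfl fun θ _ => by rw [hex θ π t]

lemma sum_swap_coord9 (Fb : (Fin (n + 2) → S) → ℝ) (hexb : Exchangeable Fb)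
    (σ : S → Bool) (s : S) (j : Fin (n + 2)) (hj : j ≠ 0) :
    (∑ t : Fin (n + 2) → S, if t 0 = s ∧ σ (t j) = true then Fb t else 0)
      = ∑ t : Fin (n + 2) → S, if t 0 = s ∧ σ (t 1) = true then Fb t else 0 := by
  have h10 : (1 : Fin (n + 2)) ≠ 0 := by
    simp [Fin.ext_iff]
  set e : ((Fin (n + 2)) → S) ≃ ((Fin (n + 2)) → S) :=
    (Equiv.swap (1 : Fin (n + 2)) j).arrowCongr (Equiv.refl S) with he
  rw [← Equiv.sum_comp e (fun t => if t 0 = s ∧ σ (t 1) = true then Fb t else 0)]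
  refine Finset.sum_congr rfl fun t _ => ?_
  have het : e t = t ∘ (Equiv.swap (1 : Fin (n + 2)) j) := by
    funext i
    simp [he, Equiv.arrowCongr, Equiv.swap_apply_def]
  have h0 : e t 0 = t 0 := by
    rw [het]
    simp [Equiv.swap_apply_of_ne_of_ne (Ne.symm h10) (Ne.symm hj)]
  have h1 : e t 1 = t j := by
    rw [het]
    simp
  have hFb : Fb (e t) = Fb t := by rw [het]; exact hexb _ t
  rw [h0, h1, hFb]

lemma sum_acts9 (Fb : (Fin (n + 2) → S) → ℝ) (hexb : Exchangeable Fb)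
    (σ : S → Bool) (s : S) :
    (∑ t : Fin (n + 2) → S, if t 0 = s then Fb t * (acts σ t : ℝ) else 0)
      = ((n : ℝ) + 1) * ∑ t : Fin (n + 2) → S,
          if t 0 = s ∧ σ (t 1) = true then Fb t else 0 := by
  have step1 : ∀ t : Fin (n + 2) → S,
      (if t 0 = s then Fb t * (acts σ t : ℝ) else 0)
        = ∑ j : Fin (n + 2), if t 0 = s ∧ (j ≠ 0 ∧ σ (t j) = true) then Fb t else 0 := by
    intro t
    by_cases h : t 0 = s
    · simp only [h, if_true, true_and]
      rw [acts, Finset.card_filter]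
      push_cast
      rw [Finset.mul_sum]
      refine Finset.sum_congr rfl fun j _ => ?_
      by_cases hc : j ≠ 0 ∧ σ (t j) = true <;> simp [hc]
    · simp [h]
  calc (∑ t : Fin (n + 2) → S, if t 0 = s then Fb t * (acts σ t : ℝ) else 0)
      = ∑ t : Fin (n + 2) → S, ∑ j : Fin (n + 2),
          if t 0 = s ∧ (j ≠ 0 ∧ σ (t j) = true) then Fb t else 0 :=
        Finset.sum_congr rfl fun t _ => step1 t
    _ = ∑ j : Fin (n + 2), ∑ t : Fin (n + 2) → S,
          if t 0 = s ∧ (j ≠ 0 ∧ σ (t j) = true) then Fb t else 0 := Finset.sum_comm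
    _ = ∑ j : Fin (n + 2), if j ≠ 0 then
          (∑ t : Fin (n + 2) → S, if t 0 = s ∧ σ (t 1) = true then Fb t else 0) else 0 := by
        refine Finset.sum_congr rfl fun j _ => ?_
        by_cases hj : j = 0
        · simp [hj]
        · simp only [hj, ne_eq, not_false_eq_true, if_true]
          rw [← sum_swap_coord9 Fb hexb σ s j hj]
          refine Finset.sum_congr rfl fun t _ => ?_
          by_cases h0 : t 0 = s <;> by_cases h1 : σ (t j) = true <;> simp [h0, h1, hj]
    _ = ((n : ℝ) + 1) * ∑ t : Fin (n + 2) → S,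
          if t 0 = s ∧ σ (t 1) = true then Fb t else 0 := by
        rw [Finset.sum_ite, Finset.sum_const, Finset.sum_const_zero, add_zero]
        rw [Finset.filter_ne', Finset.card_erase_of_mem (mem_univ 0), Finset.card_univ,
          Fintype.card_fin]
        rw [nsmul_eq_mul]
        push_cast
        ring

lemma condProb_compl9 (Fb : (Fin (n + 2) → S) → ℝ) (s : S) (K K' : Finset S)
    (hcompl : ∀ y, y ∈ K' ↔ y ∉ K) (hm : marg Fb s ≠ 0) :
    condProb Fb s K' = 1 - condProb Fb s K := by
  unfold condProb
  rw [eq_sub_iff_add_eq, ← add_div, div_eq_one_iff_eq hm]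
  rw [← Finset.sum_add_distrib]
  unfold marg
  refine Finset.sum_congr rfl fun t _ => ?_
  by_cases h0 : t 0 = s
  · by_cases h1 : t 1 ∈ K <;> simp [h0, h1, hcompl]
  · simp [h0]

lemma U_formula9 (G : SepGame Θ) (μ₀ : Θ → ℝ) (hμ₀ : ∀ θ, 0 ≤ μ₀ θ)
    (hμ₀sum : ∑ θ : Θ, μ₀ θ = 1)
    (F : Θ → (Fin (n + 2) → S) → ℝ)
    (hex : ∀ θ, Exchangeable (F θ)) (hpos : ∀ θ s, 0 < marg (F θ) s)
    (σ : S → Bool) (s : S) :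
    U G μ₀ F σ s = (∑ θ : Θ, posterior μ₀ F s θ * (G.α θ + G.β * G.l))
      + G.β * G.k * ((n : ℝ) + 1) *
          condProb (uncond μ₀ F) s (univ.filter (fun y => σ y = true)) := by
  have hMpos : 0 < marg (uncond μ₀ F) s := marg_uncond_pos9 μ₀ hμ₀ hμ₀sum F hpos s
  have hM : marg (uncond μ₀ F) s = ∑ θ : Θ, μ₀ θ * marg (F θ) s := marg_uncond9 μ₀ F s
  have hDpos : 0 < ∑ θ : Θ, μ₀ θ * marg (F θ) s := hM ▸ hMpos
  have inner : ∀ θ : Θ,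
      (∑ t : Fin (n + 2) → S,
          if t 0 = s then (F θ t / marg (F θ) s) * payoff G (acts σ t) θ else 0)
        = (G.α θ + G.β * G.l)
          + G.β * G.k / marg (F θ) s *
            ∑ t : Fin (n + 2) → S, if t 0 = s then F θ t * (acts σ t : ℝ) else 0 := by
    intro θ
    have hmθ : marg (F θ) s ≠ 0 := (hpos θ s).ne'
    have expand : ∀ t : Fin (n + 2) → S,
        (if t 0 = s then (F θ t / marg (F θ) s) * payoff G (acts σ t) θ else 0)
          = (G.α θ + G.β * G.l) / marg (F θ) s * (if t 0 = s then F θ t else 0)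
            + G.β * G.k / marg (F θ) s * (if t 0 = s then F θ t * (acts σ t : ℝ) else 0) := by
      intro t
      by_cases h : t 0 = s
      · simp only [h, if_true]
        unfold payoff
        field_simp
        ring
      · simp [h]
    rw [Finset.sum_congr rfl fun t _ => expand t, Finset.sum_add_distrib,
        ← Finset.mul_sum, ← Finset.mul_sum]
    have hmm : (∑ t : Fin (n + 2) → S, if t 0 = s then F θ t else 0) = marg (F θ) s := rfl
    rw [hmm, div_mul_cancel₀ _ hmθ]
  have key : (∑ θ : Θ, μ₀ θ *
        ∑ t : Fin (n + 2) → S, if t 0 = s then F θ t * (acts σ t : ℝ) else 0)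
      = ((n : ℝ) + 1) * ∑ t : Fin (n + 2) → S,
          if t 0 = s ∧ t 1 ∈ univ.filter (fun y => σ y = true) then uncond μ₀ F t else 0 := by
    have swap : (∑ θ : Θ, μ₀ θ *
          ∑ t : Fin (n + 2) → S, if t 0 = s then F θ t * (acts σ t : ℝ) else 0)
        = ∑ t : Fin (n + 2) → S, if t 0 = s then uncond μ₀ F t * (acts σ t : ℝ) else 0 := by
      calc (∑ θ : Θ, μ₀ θ *
            ∑ t : Fin (n + 2) → S, if t 0 = s then F θ t * (acts σ t : ℝ) else 0)
          = ∑ θ : Θ, ∑ t : Fin (n + 2) → S,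
              (if t 0 = s then μ₀ θ * (F θ t * (acts σ t : ℝ)) else 0) := by
            refine Finset.sum_congr rfl fun θ _ => ?_
            rw [Finset.mul_sum]
            exact Finset.sum_congr rfl fun t _ => by split <;> simp
        _ = ∑ t : Fin (n + 2) → S, ∑ θ : Θ,
              (if t 0 = s then μ₀ θ * (F θ t * (acts σ t : ℝ)) else 0) := Finset.sum_comm
        _ = ∑ t : Fin (n + 2) → S, if t 0 = s then uncond μ₀ F t * (acts σ t : ℝ) else 0 := by
            refine Finset.sum_congr rfl fun t _ => ?_
            split
            · rw [uncond, Finset.sum_mul]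
              exact Finset.sum_congr rfl fun θ _ => by ring
            · simp
    rw [swap, sum_acts9 _ (exchangeable_uncond9 μ₀ F hex) σ s]
    congr 1
    refine Finset.sum_congr rfl fun t _ => ?_
    simp [Finset.mem_filter]
  unfold U
  calc (∑ θ : Θ, posterior μ₀ F s θ *
        ∑ t : Fin (n + 2) → S,
          if t 0 = s then (F θ t / marg (F θ) s) * payoff G (acts σ t) θ else 0)
      = ∑ θ : Θ, (posterior μ₀ F s θ * (G.α θ + G.β * G.l)
          + G.β * G.k * (μ₀ θ / ∑ θ' : Θ, μ₀ θ' * marg (F θ') s) *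
            ∑ t : Fin (n + 2) → S, if t 0 = s then F θ t * (acts σ t : ℝ) else 0) := by
        refine Finset.sum_congr rfl fun θ _ => ?_
        rw [inner θ, mul_add]
        congr 1
        unfold posterior
        have hmθ : marg (F θ) s ≠ 0 := (hpos θ s).ne'
        field_simp
    _ = (∑ θ : Θ, posterior μ₀ F s θ * (G.α θ + G.β * G.l))
          + G.β * G.k / (∑ θ' : Θ, μ₀ θ' * marg (F θ') s) *
            ∑ θ : Θ, μ₀ θ *
              ∑ t : Fin (n + 2) → S, if t 0 = s then F θ t * (acts σ t : ℝ) else 0 := by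
        rw [Finset.sum_add_distrib]
        congr 1
        rw [Finset.mul_sum]
        exact Finset.sum_congr rfl fun θ _ => by ring
    _ = (∑ θ : Θ, posterior μ₀ F s θ * (G.α θ + G.β * G.l))
          + G.β * G.k * ((n : ℝ) + 1) *
              condProb (uncond μ₀ F) s (univ.filter (fun y => σ y = true)) := by
        rw [key]
        congr 1
        unfold condProb
        rw [hM]
        field_simp

end Aux9

/-- if the unconditional joint distribution under `F` is cCAD-higher
than under `Q`, then every cutoff equilibrium under `Q` remains a cutoff
equilibrium under `F`, in every separable common-value affine coordination game. -/
theorem ccad_uncond_cutoff_monotone {n : ℕ}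
    {S : Type*} [Fintype S] [LinearOrder S] [Nonempty S]
    {Θ : Type*} [Fintype Θ] [Nonempty Θ]
    (μ₀ : Θ → ℝ) (hμ₀ : ∀ θ, 0 ≤ μ₀ θ) (hμ₀sum : ∑ θ : Θ, μ₀ θ = 1)
    (F Q : Θ → (Fin (n + 2) → S) → ℝ)
    (hFpmf : ∀ θ, IsPMF (F θ)) (hQpmf : ∀ θ, IsPMF (Q θ))
    (hFex : ∀ θ, Exchangeable (F θ)) (hQex : ∀ θ, Exchangeable (Q θ))
    (hmarg : ∀ θ s, marg (F θ) s = marg (Q θ) s)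
    (hFpos : ∀ θ s, 0 < marg (F θ) s)
    (hcCAD : cCAD (uncond μ₀ F) (uncond μ₀ Q)) :
    ∀ (G : SepGame Θ) (σ : S → Bool),
      IsCutoffEquilibrium G μ₀ Q σ → IsCutoffEquilibrium G μ₀ F σ := by
  intro G σ hQeq
  obtain ⟨⟨st, hst⟩, hQbr⟩ := hQeq
  have hQpos : ∀ θ s, 0 < marg (Q θ) s := fun θ s => hmarg θ s ▸ hFpos θ s
  have hpost : ∀ s θ, posterior μ₀ F s θ = posterior μ₀ Q s θ := by
    intro s θ
    unfold posterior
    simp_rw [hmarg]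
  refine ⟨⟨st, hst⟩, fun s => ?_⟩
  set K : Finset S := univ.filter (fun y => σ y = true) with hK
  have hUF := U_formula9 G μ₀ hμ₀ hμ₀sum F hFex hFpos σ s
  have hUQ := U_formula9 G μ₀ hμ₀ hμ₀sum Q hQex hQpos σ s
  have hfirst : (∑ θ : Θ, posterior μ₀ F s θ * (G.α θ + G.β * G.l))
      = ∑ θ : Θ, posterior μ₀ Q s θ * (G.α θ + G.β * G.l) :=
    Finset.sum_congr rfl fun θ _ => by rw [hpost]
  have hc : 0 ≤ G.β * G.k * ((n : ℝ) + 1) :=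
    mul_nonneg (mul_nonneg G.hβ G.hk.le) (by positivity)
  have hMF : 0 < marg (uncond μ₀ F) s := marg_uncond_pos9 μ₀ hμ₀ hμ₀sum F hFpos s
  have hMQ : 0 < marg (uncond μ₀ Q) s := marg_uncond_pos9 μ₀ hμ₀ hμ₀sum Q hQpos s
  constructor
  · intro hσ
    have hstle : st ≤ s := (hst s).mp hσ
    have hKup : K = upSet st := by
      ext y
      simp [hK, upSet, hst]
    have hle := (hcCAD.2 s).1 st hstle
    rw [← hKup] at hle
    have hQU : 0 ≤ U G μ₀ Q σ s := (hQbr s).1 hσ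
    rw [hUF, hfirst]
    rw [hUQ] at hQU
    have := mul_le_mul_of_nonneg_left hle hc
    linarith
  · intro hσ
    have hnot : ¬ st ≤ s := fun h => by simp [(hst s).mpr h] at hσ
    have hslt : s < st := not_le.mp hnot
    set T := univ.filter (fun y : S => y < st) with hT
    have hTne : T.Nonempty := ⟨s, by simp [hT, hslt]⟩
    set sh := T.max' hTne with hsh
    have hshlt : sh < st := (Finset.mem_filter.mp (T.max'_mem hTne)).2
    have hsle : s ≤ sh := T.le_max' s (by simp [hT, hslt])
    have hcompl : ∀ y : S, y ∈ downSet sh ↔ y ∉ K := by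
      intro y
      simp only [downSet, hK, Finset.mem_filter, mem_univ, true_and, hst, not_le]
      constructor
      · intro hy
        exact not_le.mp (not_le.mpr (lt_of_le_of_lt hy hshlt))
      · intro hy
        exact T.le_max' y (by simp [hT, not_le.mp (not_le.mpr hy)])
    have hdown := (hcCAD.2 s).2 sh hsle
    have hFc := condProb_compl9 (uncond μ₀ F) s K (downSet sh) hcompl hMF.ne'
    have hQc := condProb_compl9 (uncond μ₀ Q) s K (downSet sh) hcompl hMQ.ne'
    have hle : condProb (uncond μ₀ F) s K ≤ condProb (uncond μ₀ Q) s K := by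
      have := hdown
      linarith
    have hQU : U G μ₀ Q σ s ≤ 0 := (hQbr s).2 hσ
    rw [hUF, hfirst]
    rw [hUQ] at hQU
    have := mul_le_mul_of_nonneg_left hle hc
    linarith
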